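/- Fix p ∈ [0,1). As N → ∞, the quantity 2N(p - p^{2N})/(2N - 1) + p^{2N} tends to p; hence the expected value of the error-probability estimator g over a multinomial (K1,K2,K3) with N trials and category probabilities ((1-p)^2, 2p(1-p), p^2) converges to p, i.e., the estimator is asymptotically unbiased. -/

import Mathlib

open Finset

/-- Joint probability mass function of `(K1, K2)` where `(K1, K2, K3)` is multinomial with
`N` trials and category probabilities `((1-p)^2, 2p(1-p), p^2)` (with `K3 = N - K1 - K2`). -/
noncomputable def multinomialPMF (N : ℕ) (p : ℝ) (k1 k2 : ℕ) : ℝ :=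
  ((N.factorial : ℝ) / (k1.factorial * k2.factorial * (N - k1 - k2).factorial)) *
    (1 - p) ^ (2 * k1) * (2 * (1 - p) * p) ^ k2 * p ^ (2 * (N - k1 - k2))

/-- The error-probability estimator. -/
noncomputable def g (k1 k2 : ℕ) : ℝ :=
  if k1 = 0 ∧ k2 = 0 then 1
  else if k2 = 0 then 0
  else (k2 : ℝ) / (2 * k1 + k2)

/-- Expected value of `g (K1, K2)` under the multinomial distribution. -/
noncomputable def expectation_g (N : ℕ) (p : ℝ) : ℝ :=
  ∑ k1 ∈ Finset.range (N + 1), ∑ k2 ∈ Finset.range (N - k1 + 1),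
    g k1 k2 * multinomialPMF N p k1 k2

/-! For `k₂ ≥ 1` the weight `k₂ / (2k₁ + k₂)` is absorbed by the multinomial coefficient,
`k₂ · N! / (k₁! k₂! k₃!) = N · (N-1)! / (k₁! (k₂-1)! k₃!)`,
and `1 / (2k₁ + k₂) = ∫₀¹ t^(2k₁+k₂-1) dt`. Summing under the integral with the trinomial
theorem gives
`E g = p^(2N) + 2N p (1-p) ∫₀¹ ((1-p) t + p)^(2N-2) dt = 2N (p - p^(2N)) / (2N - 1) + p^(2N)`
for `N ≥ 1`, which tends to `p` because `p^(2N) → 0`. -/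

open Filter Topology

noncomputable def trinomialTerm {K : Type*} [Field K] (M k1 k2 : ℕ) (x y z : K) : K :=
  (M.factorial : K) / (k1.factorial * k2.factorial * (M - k1 - k2).factorial) *
    x ^ k1 * y ^ k2 * z ^ (M - k1 - k2)

section Trinomial

variable {K : Type*} [Field K]

theorem sum_trinomialTerm [CharZero K] (M : ℕ) (x y z : K) :
    ∑ k1 ∈ range (M + 1), ∑ k2 ∈ range (M - k1 + 1), trinomialTerm M k1 k2 x y z =
      (x + y + z) ^ M := by
  rw [add_assoc, add_pow]
  refine sum_congr rfl fun k1 hk1 => ?_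
  rw [add_pow, mul_sum, sum_mul]
  refine sum_congr rfl fun k2 hk2 => ?_
  rw [Nat.cast_choose K (Nat.lt_succ_iff.mp (mem_range.mp hk1)),
    Nat.cast_choose K (Nat.lt_succ_iff.mp (mem_range.mp hk2)), trinomialTerm]
  field_simp [Nat.factorial_ne_zero]

theorem trinomialTerm_mul_pow (M k1 k2 : ℕ) (x y z t : K) :
    trinomialTerm M k1 k2 x y z * t ^ (2 * k1 + k2) =
      trinomialTerm M k1 k2 (x * t ^ 2) (y * t) z := by
  simp only [trinomialTerm, mul_pow, pow_add, pow_mul]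
  ring

end Trinomial

theorem multinomialPMF_eq_trinomialTerm (N : ℕ) (p : ℝ) (k1 k2 : ℕ) :
    multinomialPMF N p k1 k2 = trinomialTerm N k1 k2 ((1 - p) ^ 2) (2 * (1 - p) * p) (p ^ 2) := by
  simp only [multinomialPMF, trinomialTerm, pow_mul]

theorem g_mul_multinomialPMF_succ (M k1 i : ℕ) (p : ℝ) :
    g k1 (i + 1) * multinomialPMF (M + 1) p k1 (i + 1) =
      2 * (M + 1) * p * (1 - p) * trinomialTerm M k1 i ((1 - p) ^ 2) (2 * (1 - p) * p) (p ^ 2) /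
        (2 * k1 + i + 1) := by
  have hsub : M + 1 - k1 - (i + 1) = M - k1 - i := by omega
  rw [multinomialPMF_eq_trinomialTerm, g, if_neg (by simp), if_neg (by simp)]
  simp only [trinomialTerm, hsub, Nat.factorial_succ]
  push_cast
  field_simp [Nat.factorial_ne_zero]
  ring

theorem sum_g_zero_mul_multinomialPMF (N : ℕ) (p : ℝ) :
    ∑ k1 ∈ range (N + 1), g k1 0 * multinomialPMF N p k1 0 = p ^ (2 * N) := by
  rw [sum_eq_single_of_mem 0 (by simp) fun k1 _ hk1 => by simp [g, hk1]]
  simp [g, multinomialPMF, Nat.factorial_ne_zero]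

theorem g_mul_multinomialPMF_succ_eq_integral (M k1 i : ℕ) (p : ℝ) :
    g k1 (i + 1) * multinomialPMF (M + 1) p k1 (i + 1) =
      2 * (M + 1) * p * (1 - p) * ∫ t in (0 : ℝ)..1,
        trinomialTerm M k1 i ((1 - p) ^ 2 * t ^ 2) (2 * (1 - p) * p * t) (p ^ 2) := by
  simp_rw [← trinomialTerm_mul_pow]
  rw [intervalIntegral.integral_const_mul, integral_pow, g_mul_multinomialPMF_succ]
  push_cast
  ring

theorem sum_g_succ_mul_multinomialPMF_succ (M : ℕ) (p : ℝ) :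
    ∑ k1 ∈ range (M + 1), ∑ i ∈ range (M - k1 + 1),
        g k1 (i + 1) * multinomialPMF (M + 1) p k1 (i + 1) =
      2 * (M + 1) * p * (1 - p) * ∫ t in (0 : ℝ)..1, ((1 - p) * t + p) ^ (2 * M) := by
  have hcont (k1 i : ℕ) : Continuous fun t : ℝ =>
      trinomialTerm M k1 i ((1 - p) ^ 2 * t ^ 2) (2 * (1 - p) * p * t) (p ^ 2) := by
    unfold trinomialTerm
    fun_prop
  simp_rw [g_mul_multinomialPMF_succ_eq_integral, ← mul_sum]
  congr 1
  simp_rw [← intervalIntegral.integral_finsetSum fun i _ => (hcont _ i).intervalIntegrable 0 1]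
  rw [← intervalIntegral.integral_finsetSum fun k1 _ =>
    (continuous_finsetSum _ fun i _ => hcont k1 i).intervalIntegrable 0 1]
  refine intervalIntegral.integral_congr fun t _ => ?_
  rw [sum_trinomialTerm, pow_mul]
  ring

theorem expectation_g_eq_add (N : ℕ) (p : ℝ) :
    expectation_g N p = ∑ k1 ∈ range (N + 1), g k1 0 * multinomialPMF N p k1 0 +
      ∑ k1 ∈ range (N + 1), ∑ i ∈ range (N - k1),
        g k1 (i + 1) * multinomialPMF N p k1 (i + 1) := by
  rw [expectation_g, ← sum_add_distrib]
  refine sum_congr rfl fun k1 _ => ?_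
  rw [sum_range_succ', add_comm]

theorem expectation_g_succ (M : ℕ) (p : ℝ) :
    expectation_g (M + 1) p = p ^ (2 * (M + 1)) +
      2 * (M + 1) * p * (1 - p) * ∫ t in (0 : ℝ)..1, ((1 - p) * t + p) ^ (2 * M) := by
  rw [expectation_g_eq_add, sum_g_zero_mul_multinomialPMF, sum_range_succ _ (M + 1),
    Nat.sub_self, sum_range_zero, add_zero, ← sum_g_succ_mul_multinomialPMF_succ]
  congr 1
  refine sum_congr rfl fun k1 hk1 => ?_
  rw [Nat.sub_add_comm (Nat.lt_succ_iff.mp (mem_range.mp hk1))]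

theorem integral_mul_add_pow {c : ℝ} (hc : c ≠ 0) (d : ℝ) (n : ℕ) :
    ∫ t in (0 : ℝ)..1, (c * t + d) ^ n = ((c + d) ^ (n + 1) - d ^ (n + 1)) / ((n + 1) * c) := by
  rw [intervalIntegral.integral_comp_mul_add (fun t => t ^ n) hc, integral_pow, smul_eq_mul]
  field_simp
  ring

theorem expectation_g_eq {p : ℝ} (hp : p ≠ 1) {N : ℕ} (hN : 1 ≤ N) :
    expectation_g N p = 2 * (N : ℝ) * (p - p ^ (2 * N)) / (2 * (N : ℝ) - 1) + p ^ (2 * N) := by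
  obtain ⟨M, rfl⟩ := Nat.exists_eq_add_of_le' hN
  have h1p : 1 - p ≠ 0 := sub_ne_zero.mpr hp.symm
  have hM : 2 * ((M : ℝ) + 1) - 1 = 2 * M + 1 := by ring
  rw [expectation_g_succ, integral_mul_add_pow h1p, sub_add_cancel, one_pow]
  push_cast
  rw [hM]
  field_simp
  ring

theorem tendsto_two_mul_sub_pow_div_add_pow {p : ℝ} (hp : |p| < 1) :
    Tendsto (fun N : ℕ => 2 * (N : ℝ) * (p - p ^ (2 * N)) / (2 * (N : ℝ) - 1) + p ^ (2 * N))
      atTop (𝓝 p) := by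
  have hpow : Tendsto (fun N : ℕ => p ^ (2 * N)) atTop (𝓝 0) := by
    simp_rw [pow_mul]
    exact tendsto_pow_atTop_nhds_zero_of_abs_lt_one (by rw [abs_pow]; exact pow_lt_one₀ (abs_nonneg p) hp two_ne_zero)
  have hfrac := tendsto_natCast_div_add_atTop (𝕜 := ℝ) (-1 / 2)
  have hlim := ((tendsto_const_nhds (x := p)).sub hpow).mul hfrac |>.add hpow
  rw [sub_zero, mul_one, add_zero] at hlim
  refine hlim.congr' ?_
  filter_upwards [eventually_ge_atTop 1] with N hN
  have hN' : (1 : ℝ) ≤ N := by exact_mod_cast hN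
  have h1 : 2 * (N : ℝ) - 1 ≠ 0 := by linarith
  have h2 : (N : ℝ) + -1 / 2 ≠ 0 := by linarith
  field_simp
  ring

theorem error_probability_estimator_asymptotically_unbiased
    (p : ℝ) (hp : p ∈ Set.Ico (0 : ℝ) 1) :
    Filter.Tendsto
      (fun N : ℕ => 2 * (N : ℝ) * (p - p ^ (2 * N)) / (2 * (N : ℝ) - 1) + p ^ (2 * N))
      Filter.atTop (nhds p) ∧
    Filter.Tendsto (fun N : ℕ => expectation_g N p) Filter.atTop (nhds p) := by
  obtain ⟨hp0, hp1⟩ := hp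
  have hlim := tendsto_two_mul_sub_pow_div_add_pow (abs_lt.mpr ⟨by linarith, hp1⟩)
  refine ⟨hlim, hlim.congr' ?_⟩
  filter_upwards [eventually_ge_atTop 1] with N hN
  exact (expectation_g_eq hp1.ne hN).symm
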